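/- Let H be a finite-dimensional complex inner product space, let P_E and P_O be orthogonal projections on H with P_E + P_O = 1, let ψ, φ be unit vectors, and let p ∈ (0,1), q := 1 − p. Set Δ⁰ := p|ψ⟩⟨ψ| − q|φ⟩⟨φ| and M := |ψ⟩⟨ψ| + |φ⟩⟨φ|, and assume [Δ⁰, P_E] = 0. For ε ∈ ℝ set Δ^ε := Δ⁰ + ε M, Δ^ε_E := P_E Δ^ε P_E, Δ^ε_O := P_O Δ^ε P_O. Then 0 ≤ ½(‖Δ^ε‖₁ − ‖Δ^ε_E + Δ^ε_O‖₁) ≤ κ |ε|, where κ := ½(‖M‖₁ + ‖P_E M P_E + P_O M P_O‖₁) and ‖Y‖₁ = Tr √(Y† Y). -/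

import Mathlib

open Matrix
open scoped ComplexOrder Kronecker

/-- The trace norm `‖Y‖₁ = Tr √(Yᴴ Y)` of a complex matrix. -/
noncomputable def traceNorm {m : Type*} [Fintype m] [DecidableEq m]
    (Y : Matrix m m ℂ) : ℝ :=
  (((Matrix.posSemidef_conjTranspose_mul_self Y).1.eigenvectorUnitary : Matrix m m ℂ) *
    Matrix.diagonal (((↑) : ℝ → ℂ) ∘ (√·) ∘ (Matrix.posSemidef_conjTranspose_mul_self Y).1.eigenvalues) *
    (star (Matrix.posSemidef_conjTranspose_mul_self Y).1.eigenvectorUnitary : Matrix m m ℂ)).trace.re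

/-- The inner product `⟪x, y⟫ = ∑ i, conj (x i) * y i` on `m → ℂ`. -/
noncomputable def cinner {m : Type*} [Fintype m] (x y : m → ℂ) : ℂ := star x ⬝ᵥ y

/-- An orthogonal projection: a self-adjoint idempotent matrix. -/
def IsOrthoProj {m : Type*} [Fintype m] (P : Matrix m m ℂ) : Prop :=
  P.IsHermitian ∧ P * P = P

/-- An effect: an operator `S` with `0 ≤ S ≤ 1`. -/
def IsEffect {m : Type*} [Fintype m] [DecidableEq m] (S : Matrix m m ℂ) : Prop :=
  S.PosSemidef ∧ (1 - S).PosSemidef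

/-- The rank-one operator `|ψ⟩⟨ψ|`. -/
noncomputable def outer {m : Type*} (ψ : m → ℂ) : Matrix m m ℂ :=
  Matrix.vecMulVec ψ (star ψ)

/-! The pinching `X ↦ P X P + Q X Q` (for `P + Q = 1`) does not increase the trace norm, which
gives the lower bound, and it fixes `Δ⁰` because `Δ⁰` commutes with `P`. By linearity
`Δ^ε = Δ⁰ + εM` and its pinching `Δ⁰ + ε·pinch(M)` lie within trace-norm distance
`|ε|‖M‖₁` resp. `|ε|‖pinch(M)‖₁` of `Δ⁰`, so the triangle inequality gives the upper bound.
Both the triangle inequality and the contractivity of pinching follow from the variational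
formula `‖A‖₁ = max {Re Tr(SA) : -1 ≤ S ≤ 1}` for Hermitian `A`, whose maximiser is the
sign of `A`. -/

open scoped MatrixOrder

lemma Matrix.IsHermitian.ofReal_smul {m : Type*} {A : Matrix m m ℂ} (hA : A.IsHermitian)
    (c : ℝ) : ((c : ℂ) • A).IsHermitian :=
  hA.smul (Complex.conj_ofReal c)

section TraceNorm

variable {m : Type*} [Fintype m] [DecidableEq m]

lemma traceNorm_eq_re_trace_abs (Y : Matrix m m ℂ) :
    traceNorm Y = (CFC.abs Y).trace.re := by
  have h0 := (posSemidef_conjTranspose_mul_self Y).nonneg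
  rw [CFC.abs, star_eq_conjTranspose, CFC.sqrt_eq_real_sqrt _ h0, cfcₙ_eq_cfc,
    IsHermitian.cfc_eq (posSemidef_conjTranspose_mul_self Y).1]
  simp [IsHermitian.cfc, Unitary.conjStarAlgAut_apply, traceNorm]

lemma traceNorm_smul (c : ℂ) (Y : Matrix m m ℂ) :
    traceNorm (c • Y) = ‖c‖ * traceNorm Y := by
  simp [traceNorm_eq_re_trace_abs, CFC.abs_smul, trace_smul]

lemma traceNorm_ofReal_smul (c : ℝ) (Y : Matrix m m ℂ) :
    traceNorm ((c : ℂ) • Y) = |c| * traceNorm Y := by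
  rw [traceNorm_smul, Complex.norm_real, Real.norm_eq_abs]

lemma re_trace_mul_nonneg {X Y : Matrix m m ℂ} (hX : 0 ≤ X) (hY : 0 ≤ Y) :
    0 ≤ (X * Y).trace.re := by
  have hR : IsSelfAdjoint (CFC.sqrt Y) := (CFC.sqrt_nonneg Y).isSelfAdjoint
  have hconj : 0 ≤ CFC.sqrt Y * X * CFC.sqrt Y := by
    simpa [hR.star_eq] using star_left_conjugate_nonneg hX (CFC.sqrt Y)
  rw [← CFC.sqrt_mul_sqrt_self Y hY, ← mul_assoc, trace_mul_comm]
  simpa [mul_assoc] using (Complex.nonneg_iff.mp (nonneg_iff_posSemidef.mp hconj).trace_nonneg).1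

lemma Matrix.IsHermitian.re_trace_mul_le_traceNorm {A S : Matrix m m ℂ} (hA : A.IsHermitian)
    (hS₁ : -1 ≤ S) (hS₂ : S ≤ 1) : (S * A).trace.re ≤ traceNorm A := by
  have hA' : IsSelfAdjoint A := hA
  have hpos := re_trace_mul_nonneg (sub_nonneg.mpr hS₂) (CFC.posPart_nonneg A)
  have hneg := re_trace_mul_nonneg (neg_le_iff_add_nonneg.mp hS₁) (CFC.negPart_nonneg A)
  rw [traceNorm_eq_re_trace_abs, ← CFC.posPart_add_negPart A]
  nth_rewrite 1 [← CFC.posPart_sub_negPart A]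
  simp only [Matrix.sub_mul, Matrix.add_mul, Matrix.mul_sub, one_mul, trace_sub, trace_add,
    Complex.sub_re, Complex.add_re] at hpos hneg ⊢
  linarith

lemma Matrix.IsHermitian.exists_re_trace_mul_eq_traceNorm {A : Matrix m m ℂ}
    (hA : A.IsHermitian) : ∃ S : Matrix m m ℂ, -1 ≤ S ∧ S ≤ 1 ∧ (S * A).trace.re = traceNorm A := by
  have hA' : IsSelfAdjoint A := hA
  let sgn : ℝ → ℝ := fun x ↦ if 0 ≤ x then 1 else -1
  have hcont : ∀ f : ℝ → ℝ, ContinuousOn f (spectrum ℝ A) :=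
    A.finite_real_spectrum.continuousOn
  refine ⟨cfc sgn A, ?_, ?_, ?_⟩
  · rw [neg_le, ← cfc_neg sgn A]
    exact cfc_le_one _ A fun x _ ↦ by dsimp only [sgn]; split_ifs <;> norm_num
  · exact cfc_le_one sgn A fun x _ ↦ by dsimp only [sgn]; split_ifs <;> norm_num
  · have h := cfc_mul sgn (fun x ↦ x) A (hcont _) (hcont _)
    rw [cfc_id' ℝ A] at h
    rw [traceNorm_eq_re_trace_abs, CFC.abs_eq_cfc_norm A, ← h]
    congr 2
    refine cfc_congr fun x _ ↦ ?_
    dsimp only [sgn]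
    split_ifs with hx
    · simp [abs_of_nonneg hx]
    · simp [abs_of_neg (not_le.mp hx)]

lemma traceNorm_add_le {A B : Matrix m m ℂ} (hA : A.IsHermitian) (hB : B.IsHermitian) :
    traceNorm (A + B) ≤ traceNorm A + traceNorm B := by
  obtain ⟨S, hS₁, hS₂, hS⟩ := (hA.add hB).exists_re_trace_mul_eq_traceNorm
  rw [← hS, Matrix.mul_add, trace_add, Complex.add_re]
  exact add_le_add (hA.re_trace_mul_le_traceNorm hS₁ hS₂)
    (hB.re_trace_mul_le_traceNorm hS₁ hS₂)

end TraceNorm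

section Pinching

variable {m : Type*} [Fintype m]

/-- With `P = P_E`, `Q = P_O` this is the paper's `Δ ↦ Δ_E + Δ_O`. -/
def pinching (P Q : Matrix m m ℂ) : Matrix m m ℂ →ₗ[ℂ] Matrix m m ℂ where
  toFun X := P * X * P + Q * X * Q
  map_add' X Y := by simp only [Matrix.mul_add, Matrix.add_mul]; abel
  map_smul' c X := by simp only [Matrix.mul_smul, Matrix.smul_mul, smul_add, RingHom.id_apply]

lemma pinching_apply (P Q X : Matrix m m ℂ) : pinching P Q X = P * X * P + Q * X * Q := rfl

lemma trace_mul_pinching (P Q S X : Matrix m m ℂ) :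
    (S * pinching P Q X).trace = (pinching P Q S * X).trace := by
  have cyc : ∀ Z : Matrix m m ℂ, (S * (Z * X * Z)).trace = (Z * S * Z * X).trace := fun Z ↦ by
    rw [← mul_assoc, trace_mul_comm, ← mul_assoc, ← mul_assoc]
  simp only [pinching_apply, Matrix.mul_add, Matrix.add_mul, trace_add, cyc]

lemma Matrix.IsHermitian.pinching {P Q X : Matrix m m ℂ} (hX : X.IsHermitian)
    (hP : P.IsHermitian) (hQ : Q.IsHermitian) : (pinching P Q X).IsHermitian := by
  have conj : ∀ Z : Matrix m m ℂ, Z.IsHermitian → (Z * X * Z).IsHermitian := fun Z hZ ↦ by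
    simpa [hZ.eq] using isHermitian_conjTranspose_mul_mul Z hX
  exact (conj P hP).add (conj Q hQ)

lemma pinching_nonneg {P Q X : Matrix m m ℂ} (hP : P.IsHermitian) (hQ : Q.IsHermitian)
    (hX : 0 ≤ X) : 0 ≤ pinching P Q X := by
  have conj : ∀ Z : Matrix m m ℂ, Z.IsHermitian → 0 ≤ Z * X * Z := fun Z hZ ↦ by
    simpa [hZ.star_eq] using star_left_conjugate_nonneg hX Z
  exact add_nonneg (conj P hP) (conj Q hQ)

lemma pinching_mono {P Q S T : Matrix m m ℂ} (hP : P.IsHermitian) (hQ : Q.IsHermitian)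
    (hST : S ≤ T) : pinching P Q S ≤ pinching P Q T := by
  rw [← sub_nonneg, ← map_sub]
  exact pinching_nonneg hP hQ (sub_nonneg.mpr hST)

variable [DecidableEq m]

lemma pinching_one {P Q : Matrix m m ℂ} (hP : P * P = P) (hQ : Q * Q = Q) (hPQ : P + Q = 1) :
    pinching P Q 1 = 1 := by
  rw [pinching_apply, mul_one, mul_one, hP, hQ, hPQ]

lemma pinching_eq_self_of_commute {P Q X : Matrix m m ℂ} (hP : P * P = P) (hPQ : P + Q = 1)
    (hX : Commute X P) : pinching P Q X = X := by
  rw [pinching_apply, eq_sub_of_add_eq' hPQ]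
  simp only [Matrix.sub_mul, Matrix.mul_sub, one_mul, mul_one, ← hX.eq, mul_assoc X, hP]
  abel

lemma traceNorm_pinching_le {P Q X : Matrix m m ℂ} (hP : IsOrthoProj P) (hQ : IsOrthoProj Q)
    (hPQ : P + Q = 1) (hX : X.IsHermitian) : traceNorm (pinching P Q X) ≤ traceNorm X := by
  obtain ⟨S, hS₁, hS₂, hS⟩ := (hX.pinching hP.1 hQ.1).exists_re_trace_mul_eq_traceNorm
  have hone := pinching_one hP.2 hQ.2 hPQ
  have hS₁' : -1 ≤ pinching P Q S := by
    simpa [hone] using pinching_mono hP.1 hQ.1 hS₁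
  have hS₂' : pinching P Q S ≤ 1 := by
    simpa [hone] using pinching_mono hP.1 hQ.1 hS₂
  rw [← hS, trace_mul_pinching]
  exact hX.re_trace_mul_le_traceNorm hS₁' hS₂'

theorem traceNorm_sub_traceNorm_pinching_le {P Q Δ M : Matrix m m ℂ} (hP : IsOrthoProj P)
    (hQ : IsOrthoProj Q) (hPQ : P + Q = 1) (hΔ : Δ.IsHermitian) (hΔP : Commute Δ P)
    (hM : M.IsHermitian) (ε : ℝ) :
    traceNorm (Δ + (ε : ℂ) • M) - traceNorm (pinching P Q (Δ + (ε : ℂ) • M))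
      ≤ |ε| * (traceNorm M + traceNorm (pinching P Q M)) := by
  have hpM := hM.pinching hP.1 hQ.1
  have hpinch : pinching P Q (Δ + (ε : ℂ) • M) = Δ + (ε : ℂ) • pinching P Q M := by
    rw [map_add, map_smul, pinching_eq_self_of_commute hP.2 hPQ hΔP]
  have hup : traceNorm (Δ + (ε : ℂ) • M) ≤ traceNorm Δ + |ε| * traceNorm M := by
    rw [← traceNorm_ofReal_smul]
    exact traceNorm_add_le hΔ (hM.ofReal_smul ε)
  have hdown : traceNorm Δ ≤ traceNorm (Δ + (ε : ℂ) • pinching P Q M)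
      + |ε| * traceNorm (pinching P Q M) := by
    have h := traceNorm_add_le (hΔ.add (hpM.ofReal_smul ε)) (hpM.ofReal_smul (-ε))
    rwa [traceNorm_ofReal_smul, abs_neg, add_assoc, Complex.ofReal_neg, neg_smul,
      add_neg_cancel, add_zero] at h
  rw [hpinch]
  linarith

end Pinching

theorem locc_gap_perturbation_bound_general
    {n : ℕ} (P_E P_O : Matrix (Fin n) (Fin n) ℂ)
    (hPE : IsOrthoProj P_E) (hPO : IsOrthoProj P_O) (hsum : P_E + P_O = 1)
    (ψ φ : Fin n → ℂ)
    (p q : ℝ)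
    (Δ0 M : Matrix (Fin n) (Fin n) ℂ)
    (hΔ0 : Δ0 = (p : ℂ) • outer ψ - (q : ℂ) • outer φ)
    (hM : M = outer ψ + outer φ)
    (hcomm : Δ0 * P_E = P_E * Δ0)
    (ε : ℝ) (Δε : Matrix (Fin n) (Fin n) ℂ) (hΔε : Δε = Δ0 + (ε : ℂ) • M)
    (κ : ℝ)
    (hκ : κ = (traceNorm M + traceNorm (P_E * M * P_E + P_O * M * P_O)) / 2) :
    0 ≤ (traceNorm Δε - traceNorm (P_E * Δε * P_E + P_O * Δε * P_O)) / 2 ∧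
    (traceNorm Δε - traceNorm (P_E * Δε * P_E + P_O * Δε * P_O)) / 2 ≤ κ * |ε| := by
  have houter : ∀ χ : Fin n → ℂ, (outer χ).IsHermitian := fun χ ↦
    (posSemidef_vecMulVec_self_star χ).isHermitian
  have hMH : M.IsHermitian := hM ▸ (houter ψ).add (houter φ)
  have hΔ0H : Δ0.IsHermitian :=
    hΔ0 ▸ ((houter ψ).ofReal_smul p).sub ((houter φ).ofReal_smul q)
  have hΔεH : Δε.IsHermitian := hΔε ▸ hΔ0H.add (hMH.ofReal_smul ε)
  have hcontr := traceNorm_pinching_le hPE hPO hsum hΔεH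
  have hgap := traceNorm_sub_traceNorm_pinching_le hPE hPO hsum hΔ0H hcomm hMH ε
  rw [← hΔε] at hgap
  simp only [pinching_apply] at hcontr hgap
  constructor
  · linarith
  · rw [hκ]
    linarith

/-- **Perturbation bound (Eq. (14)).** The gap between the optimal LOCC error and the
unconstrained Helstrom error for the perturbed prior is nonnegative and bounded by `κ|ε|`. -/
theorem locc_gap_perturbation_bound
    {n : ℕ} (P_E P_O : Matrix (Fin n) (Fin n) ℂ)
    (hPE : IsOrthoProj P_E) (hPO : IsOrthoProj P_O) (hsum : P_E + P_O = 1)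
    (ψ φ : Fin n → ℂ) (hψ : cinner ψ ψ = 1) (hφ : cinner φ φ = 1)
    (p q : ℝ) (hp : p ∈ Set.Ioo (0 : ℝ) 1) (hq : q = 1 - p)
    (Δ0 M : Matrix (Fin n) (Fin n) ℂ)
    (hΔ0 : Δ0 = (p : ℂ) • outer ψ - (q : ℂ) • outer φ)
    (hM : M = outer ψ + outer φ)
    (hcomm : Δ0 * P_E = P_E * Δ0)
    (ε : ℝ) (Δε : Matrix (Fin n) (Fin n) ℂ) (hΔε : Δε = Δ0 + (ε : ℂ) • M)
    (κ : ℝ)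
    (hκ : κ = (traceNorm M + traceNorm (P_E * M * P_E + P_O * M * P_O)) / 2) :
    0 ≤ (traceNorm Δε - traceNorm (P_E * Δε * P_E + P_O * Δε * P_O)) / 2 ∧
    (traceNorm Δε - traceNorm (P_E * Δε * P_E + P_O * Δε * P_O)) / 2 ≤ κ * |ε| :=
  locc_gap_perturbation_bound_general P_E P_O hPE hPO hsum ψ φ p q Δ0 M hΔ0 hM hcomm ε Δε hΔε κ hκ
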